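/- arXiv:2409.18426 — 8 statements merged into one kernel-verified Lean document; each statement's English description precedes it below -/
import Mathlib

section
/- Let g_r, g_b be nonzero vectors in ℝ^d and g = g_r + g_b. Define p_r = g - (⟨g, g_r⟩/‖g_r‖²) g_r (the projection of g onto the orthogonal complement of g_r) and p_b = g - (⟨g, g_b⟩/‖g_b‖²) g_b. Then for all c₁, c₂ ≥ 0, the vector v = c₁ p_r + c₂ p_b satisfies ⟨v, g_r⟩ ≥ 0 and ⟨v, g_b⟩ ≥ 0. -/
/-!
`p_r` and `p_b` are the rejections of `g` from `g_r` and from `g_b`. The rejection `p` of `x`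
from `w` is orthogonal to `w`, so `⟪p, x⟫ = ‖p‖² ≥ 0`. Since `g = g_r + g_b`, this gives
`⟪p_b, g_r⟫ = ⟪p_b, g⟫ - ⟪p_b, g_b⟫ = ‖p_b‖² ≥ 0`, and symmetrically for `p_r`; the inner
products with a nonnegative combination are then nonnegative by linearity.
-/

open RealInnerProductSpace

variable {E : Type*} [NormedAddCommGroup E] [InnerProductSpace ℝ E]

/-- For `w = 0` the coefficient is `0 / 0 = 0`, so the rejection of `x` from `0` is `x`. -/
noncomputable def rejection (w x : E) : E :=
  x - (⟪x, w⟫ / ‖w‖ ^ 2) • w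

theorem inner_rejection_self (w x : E) : ⟪rejection w x, w⟫ = 0 := by
  rcases eq_or_ne w 0 with rfl | hw
  · simp
  have hw2 : ‖w‖ ^ 2 ≠ 0 := by positivity
  rw [rejection, inner_sub_left, real_inner_smul_left, real_inner_self_eq_norm_sq,
    div_mul_cancel₀ _ hw2, sub_self]

theorem inner_rejection_eq_norm_sq (w x : E) : ⟪rejection w x, x⟫ = ‖rejection w x‖ ^ 2 := by
  calc ⟪rejection w x, x⟫
      = ⟪rejection w x, rejection w x + (⟪x, w⟫ / ‖w‖ ^ 2) • w⟫ := by
        rw [rejection, sub_add_cancel]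
    _ = ‖rejection w x‖ ^ 2 := by
        rw [inner_add_right, real_inner_smul_right, inner_rejection_self, mul_zero, add_zero,
          real_inner_self_eq_norm_sq]

theorem inner_rejection_add_nonneg (u w : E) : 0 ≤ ⟪rejection w (u + w), u⟫ := by
  have h : ⟪rejection w (u + w), u⟫ = ‖rejection w (u + w)‖ ^ 2 := by
    rw [← inner_rejection_eq_norm_sq, inner_add_right, inner_rejection_self, add_zero]
  exact h ▸ sq_nonneg _

theorem inner_smul_add_smul_nonneg {p q y : E} (hp : 0 ≤ ⟪p, y⟫) (hq : 0 ≤ ⟪q, y⟫)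
    {c₁ c₂ : ℝ} (hc₁ : 0 ≤ c₁) (hc₂ : 0 ≤ c₂) : 0 ≤ ⟪c₁ • p + c₂ • q, y⟫ := by
  rw [inner_add_left, real_inner_smul_left, real_inner_smul_left]
  positivity

theorem stmt2_general {d : ℕ} (g_r g_b : EuclideanSpace ℝ (Fin d))
    (g p_r p_b : EuclideanSpace ℝ (Fin d))
    (hg : g = g_r + g_b)
    (hpr : p_r = g - (⟪g, g_r⟫ / ‖g_r‖ ^ 2) • g_r)
    (hpb : p_b = g - (⟪g, g_b⟫ / ‖g_b‖ ^ 2) • g_b)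
    (c₁ c₂ : ℝ) (hc₁ : 0 ≤ c₁) (hc₂ : 0 ≤ c₂) :
    ⟪c₁ • p_r + c₂ • p_b, g_r⟫ ≥ 0 ∧ ⟪c₁ • p_r + c₂ • p_b, g_b⟫ ≥ 0 := by
  have hpr' : p_r = rejection g_r (g_b + g_r) := by rw [hpr, hg, add_comm]; rfl
  have hpb' : p_b = rejection g_b (g_r + g_b) := by rw [hpb, hg]; rfl
  subst hpr' hpb'
  exact ⟨inner_smul_add_smul_nonneg (inner_rejection_self _ _).ge
      (inner_rejection_add_nonneg _ _) hc₁ hc₂,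
    inner_smul_add_smul_nonneg (inner_rejection_add_nonneg _ _)
      (inner_rejection_self _ _).ge hc₁ hc₂⟩

theorem stmt2 {d : ℕ} (g_r g_b : EuclideanSpace ℝ (Fin d))
    (hr : g_r ≠ 0) (hb : g_b ≠ 0)
    (g p_r p_b : EuclideanSpace ℝ (Fin d))
    (hg : g = g_r + g_b)
    (hpr : p_r = g - (⟪g, g_r⟫ / ‖g_r‖ ^ 2) • g_r)
    (hpb : p_b = g - (⟪g, g_b⟫ / ‖g_b‖ ^ 2) • g_b)
    (c₁ c₂ : ℝ) (hc₁ : 0 ≤ c₁) (hc₂ : 0 ≤ c₂) :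
    ⟪c₁ • p_r + c₂ • p_b, g_r⟫ ≥ 0 ∧ ⟪c₁ • p_r + c₂ • p_b, g_b⟫ ≥ 0 :=
  stmt2_general g_r g_b g p_r p_b hg hpr hpb c₁ c₂ hc₁ hc₂
end

section
/- Let g_r, g_b be nonzero vectors in ℝ^d, g = g_r + g_b, and g^c = g_b/‖g_b‖ + g_r/‖g_r‖ with g^c ≠ 0. Then the projection g* = (⟨g^c, g⟩/‖g^c‖²) g^c satisfies ⟨g*, g_r⟩ ≥ 0 and ⟨g*, g_b⟩ ≥ 0. -/
open RealInnerProductSpace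

theorem stmt5 {d : ℕ} (g_r g_b : EuclideanSpace ℝ (Fin d))
    (hr : g_r ≠ 0) (hb : g_b ≠ 0)
    (g gc gstar : EuclideanSpace ℝ (Fin d))
    (hg : g = g_r + g_b)
    (hgc : gc = ‖g_b‖⁻¹ • g_b + ‖g_r‖⁻¹ • g_r)
    (hgcne : gc ≠ 0)
    (hgs : gstar = (⟪gc, g⟫ / ‖gc‖ ^ 2) • gc) :
    ⟪gstar, g_r⟫ ≥ 0 ∧ ⟪gstar, g_b⟫ ≥ 0 := by
  have hrn : (0:ℝ) < ‖g_r‖ := norm_pos_iff.mpr hr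
  have hbn : (0:ℝ) < ‖g_b‖ := norm_pos_iff.mpr hb
  have hib : ‖g_b‖⁻¹ * ‖g_b‖ = 1 := inv_mul_cancel₀ (ne_of_gt hbn)
  have hir : ‖g_r‖⁻¹ * ‖g_r‖ = 1 := inv_mul_cancel₀ (ne_of_gt hrn)
  have h1 : ⟪g_b, g_r⟫ ≥ -(‖g_b‖ * ‖g_r‖) := by
    have := abs_real_inner_le_norm g_b g_r
    linarith [neg_abs_le (⟪g_b, g_r⟫ : ℝ)]
  have h2 : ⟪g_r, g_b⟫ ≥ -(‖g_r‖ * ‖g_b‖) := by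
    have := abs_real_inner_le_norm g_r g_b
    linarith [neg_abs_le (⟪g_r, g_b⟫ : ℝ)]
  have hcr : ⟪gc, g_r⟫ ≥ 0 := by
    rw [hgc, inner_add_left, real_inner_smul_left, real_inner_smul_left,
      real_inner_self_eq_norm_sq]
    nlinarith [mul_le_mul_of_nonneg_left h1 (le_of_lt (inv_pos.mpr hbn))]
  have hcb : ⟪gc, g_b⟫ ≥ 0 := by
    rw [hgc, inner_add_left, real_inner_smul_left, real_inner_smul_left,
      real_inner_self_eq_norm_sq]
    nlinarith [mul_le_mul_of_nonneg_left h2 (le_of_lt (inv_pos.mpr hrn))]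
  have hcg : ⟪gc, g⟫ ≥ 0 := by
    rw [hg, inner_add_right]; linarith
  have hcoef : ⟪gc, g⟫ / ‖gc‖ ^ 2 ≥ 0 := div_nonneg hcg (by positivity)
  constructor <;> rw [hgs, real_inner_smul_left] <;>
    exact mul_nonneg hcoef (by assumption)
end

section
/- Let g_r, g_b be nonzero vectors in ℝ^d, g = g_r + g_b, p_r = g - (⟨g, g_r⟩/‖g_r‖²) g_r, p_b = g - (⟨g, g_b⟩/‖g_b‖²) g_b, and c₁, c₂ ≥ 0 with c₁ + c₂ = 1. Then ‖c₁ p_r + c₂ p_b - g‖ ≤ ‖g‖, and consequently 2⟨g, c₁ p_r + c₂ p_b⟩ - ‖c₁ p_r + c₂ p_b‖² ≥ 0. -/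
open RealInnerProductSpace

lemma aux8 {d : ℕ} (g v : EuclideanSpace ℝ (Fin d)) (hv : v ≠ 0) :
    ‖(g - (⟪g, v⟫ / ‖v‖ ^ 2) • v) - g‖ ≤ ‖g‖ := by
  have h0 : ‖v‖ ≠ 0 := norm_ne_zero_iff.mpr hv
  have : (g - (⟪g, v⟫ / ‖v‖ ^ 2) • v) - g = -((⟪g, v⟫ / ‖v‖ ^ 2) • v) := by abel
  rw [this, norm_neg, norm_smul]
  have hcs := abs_real_inner_le_norm g v
  rw [Real.norm_eq_abs, abs_div, abs_pow, abs_norm]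
  rw [div_mul_eq_mul_div, div_le_iff₀ (by positivity)]
  calc |⟪g, v⟫| * ‖v‖ ≤ ‖g‖ * ‖v‖ * ‖v‖ := by nlinarith [norm_nonneg v]
    _ = ‖g‖ * ‖v‖ ^ 2 := by ring

theorem stmt8 {d : ℕ} (g_r g_b : EuclideanSpace ℝ (Fin d))
    (hr : g_r ≠ 0) (hb : g_b ≠ 0)
    (g p_r p_b : EuclideanSpace ℝ (Fin d)) (c₁ c₂ : ℝ)
    (hg : g = g_r + g_b)
    (hpr : p_r = g - (⟪g, g_r⟫ / ‖g_r‖ ^ 2) • g_r)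
    (hpb : p_b = g - (⟪g, g_b⟫ / ‖g_b‖ ^ 2) • g_b)
    (hc₁ : 0 ≤ c₁) (hc₂ : 0 ≤ c₂) (hsum : c₁ + c₂ = 1) :
    ‖c₁ • p_r + c₂ • p_b - g‖ ≤ ‖g‖ ∧
    2 * ⟪g, c₁ • p_r + c₂ • p_b⟫ - ‖c₁ • p_r + c₂ • p_b‖ ^ 2 ≥ 0 := by
  have h1 : ‖p_r - g‖ ≤ ‖g‖ := by rw [hpr]; exact aux8 g g_r hr
  have h2 : ‖p_b - g‖ ≤ ‖g‖ := by rw [hpb]; exact aux8 g g_b hb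
  have hdecomp : c₁ • p_r + c₂ • p_b - g = c₁ • (p_r - g) + c₂ • (p_b - g) := by
    have : c₁ • (p_r - g) + c₂ • (p_b - g)
        = c₁ • p_r + c₂ • p_b - (c₁ + c₂) • g := by
      rw [smul_sub, smul_sub, add_smul]; abel
    rw [this, hsum, one_smul]
  have hmain : ‖c₁ • p_r + c₂ • p_b - g‖ ≤ ‖g‖ := by
    rw [hdecomp]
    calc ‖c₁ • (p_r - g) + c₂ • (p_b - g)‖
        ≤ ‖c₁ • (p_r - g)‖ + ‖c₂ • (p_b - g)‖ := norm_add_le _ _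
      _ = c₁ * ‖p_r - g‖ + c₂ * ‖p_b - g‖ := by
          rw [norm_smul, norm_smul, Real.norm_eq_abs, Real.norm_eq_abs,
            abs_of_nonneg hc₁, abs_of_nonneg hc₂]
      _ ≤ c₁ * ‖g‖ + c₂ * ‖g‖ := by
          gcongr
      _ = ‖g‖ := by rw [← add_mul, hsum, one_mul]
  refine ⟨hmain, ?_⟩
  set p := c₁ • p_r + c₂ • p_b with hp
  have hsq : ‖p - g‖ ^ 2 ≤ ‖g‖ ^ 2 := by
    have := norm_nonneg (p - g)
    nlinarith
  have hexp : ‖p - g‖ ^ 2 = ‖p‖ ^ 2 - 2 * ⟪p, g⟫ + ‖g‖ ^ 2 :=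
    norm_sub_sq_real p g
  have hcomm : ⟪p, g⟫ = ⟪g, p⟫ := real_inner_comm g p
  nlinarith
end

section
/- Let g_r, g_b be nonzero vectors in ℝ^d with angle φ between them satisfying cos φ > -1 (not anti-parallel), g = g_r + g_b, and let g^c = g_b/‖g_b‖ + g_r/‖g_r‖ and g* = (⟨g^c, g⟩/‖g^c‖²) g^c. Then ‖g - g*‖ ≤ ‖g‖ and ‖g*‖ ≥ cos(φ/2)·‖g‖. -/
/-!
With `e_r = g_r / ‖g_r‖` and `e_b = g_b / ‖g_b‖`, the bisector `g^c = e_b + e_r` satisfies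
`⟪g^c, g⟫ = (‖g_r‖ + ‖g_b‖)(1 + cos φ)` and `‖g^c‖² = 2(1 + cos φ)`, so the projection `g*` of `g`
onto the line `ℝ g^c` has norm `(‖g_r‖ + ‖g_b‖) √((1 + cos φ)/2) = (‖g_r‖ + ‖g_b‖) cos (φ/2)`,
which dominates `cos (φ/2) ‖g‖` by the triangle inequality. The bound `‖g - g*‖ ≤ ‖g‖` holds for
any orthogonal projection, since `g - g*` is the projection of `g` onto the orthogonal complement.
-/

open RealInnerProductSpace InnerProductGeometry

section Projection

variable {𝕜 E : Type*} [RCLike 𝕜] [NormedAddCommGroup E] [InnerProductSpace 𝕜 E]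

theorem Submodule.norm_sub_starProjection_le (K : Submodule 𝕜 E) [K.HasOrthogonalProjection]
    (v : E) : ‖v - K.starProjection v‖ ≤ ‖v‖ := by
  rw [← K.starProjection_orthogonal_val]
  exact Kᗮ.norm_starProjection_apply_le v

end Projection

variable {E : Type*} [NormedAddCommGroup E] [InnerProductSpace ℝ E]

theorem starProjection_span_singleton_eq_real (u v : E) :
    (ℝ ∙ u).starProjection v = (⟪u, v⟫ / ‖u‖ ^ 2) • u := by
  simpa using Submodule.starProjection_singleton ℝ (v := u) v

theorem norm_starProjection_span_singleton_real (u v : E) :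
    ‖(ℝ ∙ u).starProjection v‖ = |⟪u, v⟫| / ‖u‖ := by
  rw [starProjection_span_singleton_eq_real, norm_smul, Real.norm_eq_abs, abs_div, abs_pow,
    abs_norm]
  rcases eq_or_ne ‖u‖ 0 with hu | hu
  · simp [hu]
  · field_simp

/-- The bisector `g^c` of the directions of `x` and `y`. -/
noncomputable def bisector (x y : E) : E := ‖y‖⁻¹ • y + ‖x‖⁻¹ • x

theorem inner_bisector_add {x y : E} (hx : x ≠ 0) (hy : y ≠ 0) :
    ⟪bisector x y, x + y⟫ = (‖x‖ + ‖y‖) * (1 + Real.cos (angle x y)) := by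
  have hx' : ‖x‖ ≠ 0 := norm_ne_zero_iff.mpr hx
  have hy' : ‖y‖ ≠ 0 := norm_ne_zero_iff.mpr hy
  rw [bisector, cos_angle]
  simp only [inner_add_left, inner_add_right, real_inner_smul_left, real_inner_self_eq_norm_sq,
    real_inner_comm x y]
  field_simp
  ring

theorem norm_bisector_sq {x y : E} (hx : x ≠ 0) (hy : y ≠ 0) :
    ‖bisector x y‖ ^ 2 = 2 * (1 + Real.cos (angle x y)) := by
  have hx' : ‖x‖ ≠ 0 := norm_ne_zero_iff.mpr hx
  have hy' : ‖y‖ ≠ 0 := norm_ne_zero_iff.mpr hy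
  rw [← real_inner_self_eq_norm_sq, bisector, cos_angle]
  simp only [inner_add_left, inner_add_right, real_inner_smul_left, real_inner_smul_right,
    real_inner_self_eq_norm_sq, norm_smul, norm_inv, norm_norm, real_inner_comm x y]
  field_simp
  ring

theorem cos_angle_div_two (x y : E) :
    Real.cos (angle x y / 2) = √((1 + Real.cos (angle x y)) / 2) :=
  Real.cos_half (by linarith [angle_nonneg x y, Real.pi_pos]) (angle_le_pi x y)

theorem norm_starProjection_bisector {x y : E} (hx : x ≠ 0) (hy : y ≠ 0) :
    ‖(ℝ ∙ bisector x y).starProjection (x + y)‖ = (‖x‖ + ‖y‖) * Real.cos (angle x y / 2) := by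
  set t := 1 + Real.cos (angle x y)
  have ht : 0 ≤ t := by linarith [Real.neg_one_le_cos (angle x y)]
  -- Also true at `t = 0` (antiparallel `x`, `y`), where both sides are `0` since `x / 0 = 0`.
  have hdiv : t / √(2 * t) = √(t / 2) := by
    rw [Real.sqrt_mul zero_le_two, Real.sqrt_div' _ zero_le_two, mul_comm, ← div_div,
      Real.div_sqrt]
  have hnorm : ‖bisector x y‖ = √(2 * t) := by
    rw [← norm_bisector_sq hx hy, Real.sqrt_sq (norm_nonneg _)]
  rw [norm_starProjection_span_singleton_real, inner_bisector_add hx hy, hnorm,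
    abs_of_nonneg (by positivity), mul_div_assoc, hdiv, cos_angle_div_two]

theorem stmt9_general {d : ℕ} (g_r g_b : EuclideanSpace ℝ (Fin d))
    (hr : g_r ≠ 0) (hb : g_b ≠ 0)
    (φ : ℝ) (hφ : φ = Real.arccos (⟪g_r, g_b⟫ / (‖g_r‖ * ‖g_b‖)))
    (g gc gstar : EuclideanSpace ℝ (Fin d))
    (hg : g = g_r + g_b)
    (hgc : gc = ‖g_b‖⁻¹ • g_b + ‖g_r‖⁻¹ • g_r)
    (hgs : gstar = (⟪gc, g⟫ / ‖gc‖ ^ 2) • gc) :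
    ‖g - gstar‖ ≤ ‖g‖ ∧ ‖gstar‖ ≥ Real.cos (φ / 2) * ‖g‖ := by
  have hφ : φ = angle g_r g_b := hφ
  have hgc : gc = bisector g_r g_b := hgc
  rw [← starProjection_span_singleton_eq_real] at hgs
  subst hgs hgc hg hφ
  refine ⟨Submodule.norm_sub_starProjection_le _ _, ?_⟩
  rw [norm_starProjection_bisector hr hb, ge_iff_le, mul_comm]
  exact mul_le_mul_of_nonneg_right (norm_add_le _ _)
    (by rw [cos_angle_div_two]; exact Real.sqrt_nonneg _)

theorem stmt9 {d : ℕ} (g_r g_b : EuclideanSpace ℝ (Fin d))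
    (hr : g_r ≠ 0) (hb : g_b ≠ 0)
    (φ : ℝ) (hφ : φ = Real.arccos (⟪g_r, g_b⟫ / (‖g_r‖ * ‖g_b‖)))
    (hcos : Real.cos φ > -1)
    (g gc gstar : EuclideanSpace ℝ (Fin d))
    (hg : g = g_r + g_b)
    (hgc : gc = ‖g_b‖⁻¹ • g_b + ‖g_r‖⁻¹ • g_r)
    (hgs : gstar = (⟪gc, g⟫ / ‖gc‖ ^ 2) • gc) :
    ‖g - gstar‖ ≤ ‖g‖ ∧ ‖gstar‖ ≥ Real.cos (φ / 2) * ‖g‖ :=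
  stmt9_general g_r g_b hr hb φ hφ g gc gstar hg hgc hgs
end

section
/- Let g_r, g_b ∈ ℝ^d be nonzero, let α₁, α₂ ≥ 0 with α₁ + α₂ = 1, and let u = α₁ g_r + α₂ g_b be the minimum-norm element among all such convex combinations. Then ⟨u, g_r⟩ ≥ ‖u‖² ≥ 0 and ⟨u, g_b⟩ ≥ ‖u‖² ≥ 0; in particular u lies in the dual cone of the cone generated by g_r and g_b. -/
open RealInnerProductSpace

lemma key_aux {d : ℕ} (u w : EuclideanSpace ℝ (Fin d))
    (h : ∀ t : ℝ, 0 < t → t ≤ 1 → ‖u‖ ≤ ‖u + t • w‖) : 0 ≤ ⟪u, w⟫ := by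
  by_contra hc
  push_neg at hc
  by_cases hw : w = 0
  · simp [hw] at hc
  · have hwpos : 0 < ‖w‖ ^ 2 := pow_pos (norm_pos_iff.mpr hw) 2
    set c := ⟪u, w⟫ with hcdef
    set t := min 1 (-c / ‖w‖ ^ 2) with ht
    have htpos : 0 < t := lt_min one_pos (div_pos (by linarith) hwpos)
    have ht1 : t ≤ 1 := min_le_left _ _
    have hle := h t htpos ht1
    have hsq : ‖u‖ ^ 2 ≤ ‖u + t • w‖ ^ 2 := by
      apply pow_le_pow_left₀ (norm_nonneg _) hle
    rw [norm_add_sq_real, real_inner_smul_right, norm_smul] at hsq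
    have hexp : ‖u‖ ^ 2 + 2 * (t * c) + (‖t‖ * ‖w‖) ^ 2
        = ‖u‖ ^ 2 + t * (2 * c + t * ‖w‖ ^ 2) := by
      rw [Real.norm_eq_abs, mul_pow, sq_abs]; ring
    rw [hexp] at hsq
    have h2 : 0 ≤ 2 * c + t * ‖w‖ ^ 2 := by nlinarith
    have h3 : t * ‖w‖ ^ 2 ≤ -c := by
      have := min_le_right 1 (-c / ‖w‖ ^ 2)
      calc t * ‖w‖ ^ 2 ≤ (-c / ‖w‖ ^ 2) * ‖w‖ ^ 2 := by nlinarith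
        _ = -c := by field_simp
    linarith

theorem stmt13 {d : ℕ} (g_r g_b : EuclideanSpace ℝ (Fin d))
    (hr : g_r ≠ 0) (hb : g_b ≠ 0)
    (α₁ α₂ : ℝ) (hα₁ : 0 ≤ α₁) (hα₂ : 0 ≤ α₂) (hsum : α₁ + α₂ = 1)
    (u : EuclideanSpace ℝ (Fin d)) (hu : u = α₁ • g_r + α₂ • g_b)
    (hmin : ∀ β₁ β₂ : ℝ, 0 ≤ β₁ → 0 ≤ β₂ → β₁ + β₂ = 1 →
      ‖u‖ ≤ ‖β₁ • g_r + β₂ • g_b‖) :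
    (⟪u, g_r⟫ ≥ ‖u‖ ^ 2 ∧ (‖u‖ : ℝ) ^ 2 ≥ 0) ∧
    (⟪u, g_b⟫ ≥ ‖u‖ ^ 2 ∧ (‖u‖ : ℝ) ^ 2 ≥ 0) := by
  have hnn : (‖u‖ : ℝ) ^ 2 ≥ 0 := by positivity
  have hr' : 0 ≤ ⟪u, g_r - u⟫ := by
    apply key_aux
    intro t htpos ht1
    have := hmin ((1 - t) * α₁ + t) ((1 - t) * α₂) (by nlinarith) (by nlinarith)
      (by nlinarith)
    convert this using 2
    rw [hu]
    simp only [smul_add, smul_smul, add_smul, sub_smul, smul_sub]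
    module
  have hb' : 0 ≤ ⟪u, g_b - u⟫ := by
    apply key_aux
    intro t htpos ht1
    have := hmin ((1 - t) * α₁) ((1 - t) * α₂ + t) (by nlinarith) (by nlinarith)
      (by nlinarith)
    convert this using 2
    rw [hu]
    module
  rw [inner_sub_right, real_inner_self_eq_norm_sq] at hr' hb'
  exact ⟨⟨by linarith, hnn⟩, ⟨by linarith, hnn⟩⟩
end

section
/- Let g_r, g_b be nonzero vectors in ℝ^d with ⟨g_r, g_b⟩ < 0, and set p_r = g_b - (⟨g_b, g_r⟩/‖g_r‖²) g_r and p_b = g_r - (⟨g_r, g_b⟩/‖g_b‖²) g_b. Then the PCGrad update u = (1/2)(p_r + p_b) satisfies ⟨u, g_r⟩ ≥ 0 and ⟨u, g_b⟩ ≥ 0. -/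
open RealInnerProductSpace

/-!
Each of `p_r`, `p_b` is the component of one gradient orthogonal to the other: `p_r = w - P w` with
`w = g_b` and `P` the orthogonal projection onto `ℝ ∙ g_r`. Such a rejection is orthogonal to the
line it is taken against, and its inner product with `w` is `‖w - P w‖ ^ 2 ≥ 0`. Hence
`2 ⟪u, g_r⟫ = 0 + ⟪p_b, g_r⟫ ≥ 0`, and symmetrically for `g_b`.
-/

section Rejection

variable {E : Type*} [NormedAddCommGroup E] [InnerProductSpace ℝ E]

theorem sub_inner_div_norm_sq_smul_eq_sub_starProjection (v w : E) :
    w - (⟪w, v⟫ / ‖v‖ ^ 2) • v = w - (ℝ ∙ v).starProjection w := by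
  rw [Submodule.starProjection_singleton, real_inner_comm]
  rfl

theorem inner_sub_inner_div_norm_sq_smul_self (v w : E) :
    ⟪w - (⟪w, v⟫ / ‖v‖ ^ 2) • v, v⟫ = 0 := by
  rw [sub_inner_div_norm_sq_smul_eq_sub_starProjection]
  exact Submodule.starProjection_inner_eq_zero w v (Submodule.mem_span_singleton_self v)

theorem inner_sub_inner_div_norm_sq_smul_nonneg (v w : E) :
    0 ≤ ⟪w - (⟪w, v⟫ / ‖v‖ ^ 2) • v, w⟫ := by
  rw [sub_inner_div_norm_sq_smul_eq_sub_starProjection]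
  set r := w - (ℝ ∙ v).starProjection w
  have hr : ⟪r, (ℝ ∙ v).starProjection w⟫ = 0 :=
    Submodule.starProjection_inner_eq_zero w _ (Submodule.coe_mem _)
  calc 0 ≤ ‖r‖ ^ 2 := sq_nonneg _
    _ = ⟪r, r + (ℝ ∙ v).starProjection w⟫ := by
      rw [inner_add_right, hr, add_zero, real_inner_self_eq_norm_sq]
    _ = ⟪r, w⟫ := by rw [sub_add_cancel]

end Rejection

theorem stmt14_general {d : ℕ} (g_r g_b : EuclideanSpace ℝ (Fin d))
    (p_r p_b u : EuclideanSpace ℝ (Fin d))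
    (hpr : p_r = g_b - (⟪g_b, g_r⟫ / ‖g_r‖ ^ 2) • g_r)
    (hpb : p_b = g_r - (⟪g_r, g_b⟫ / ‖g_b‖ ^ 2) • g_b)
    (hu : u = (1 / 2 : ℝ) • (p_r + p_b)) :
    ⟪u, g_r⟫ ≥ 0 ∧ ⟪u, g_b⟫ ≥ 0 := by
  have hr_r : ⟪p_r, g_r⟫ = 0 := hpr ▸ inner_sub_inner_div_norm_sq_smul_self g_r g_b
  have hr_b : 0 ≤ ⟪p_r, g_b⟫ := hpr ▸ inner_sub_inner_div_norm_sq_smul_nonneg g_r g_b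
  have hb_b : ⟪p_b, g_b⟫ = 0 := hpb ▸ inner_sub_inner_div_norm_sq_smul_self g_b g_r
  have hb_r : 0 ≤ ⟪p_b, g_r⟫ := hpb ▸ inner_sub_inner_div_norm_sq_smul_nonneg g_b g_r
  subst hu
  simp only [real_inner_smul_left, inner_add_left]
  constructor <;> positivity

theorem stmt14 {d : ℕ} (g_r g_b : EuclideanSpace ℝ (Fin d))
    (hr : g_r ≠ 0) (hb : g_b ≠ 0) (hconf : ⟪g_r, g_b⟫ < 0)
    (p_r p_b u : EuclideanSpace ℝ (Fin d))
    (hpr : p_r = g_b - (⟪g_b, g_r⟫ / ‖g_r‖ ^ 2) • g_r)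
    (hpb : p_b = g_r - (⟪g_r, g_b⟫ / ‖g_b‖ ^ 2) • g_b)
    (hu : u = (1 / 2 : ℝ) • (p_r + p_b)) :
    ⟪u, g_r⟫ ≥ 0 ∧ ⟪u, g_b⟫ ≥ 0 :=
  stmt14_general g_r g_b p_r p_b u hpr hpb hu
end

section
/- Let g_r, g_b be nonzero vectors in ℝ² (or ℝ^d) with cos φ = ⟨g_r, g_b⟩/(‖g_r‖‖g_b‖) > -1. Let G be the d×2 matrix with columns g_r and g_b. Then v = (v₁, v₂) with v₁ = (1/√(1 + cos φ))·(1/‖g_r‖) and v₂ = (1/√(1 + cos φ))·(1/‖g_b‖) satisfies GᵀG v = (1/v₁, 1/v₂)ᵀ, and G v = (1/√(1 + cos φ))·(g_r/‖g_r‖ + g_b/‖g_b‖). -/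
/-!
With `s = 1 / √(1 + cos φ)`, the vector `G v = v₀ g_r + v₁ g_b` is `s` times the bisector
`g_r/‖g_r‖ + g_b/‖g_b‖`. Pairing the bisector with `g_r` gives `‖g_r‖ (1 + cos φ)`, so
`(GᵀG v)₀ = ⟪g_r, G v⟫ = ‖g_r‖ √(1 + cos φ) = 1 / v₀`, and symmetrically for the index `1`.
-/

open RealInnerProductSpace Matrix

section InnerProductSpace

variable {E : Type*} [NormedAddCommGroup E] [InnerProductSpace ℝ E]

theorem inner_normalize_add_normalize_left (x y : E) :
    ⟪x, ‖x‖⁻¹ • x + ‖y‖⁻¹ • y⟫ = ‖x‖ * (1 + ⟪x, y⟫ / (‖x‖ * ‖y‖)) := by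
  rcases eq_or_ne x 0 with rfl | hx
  · simp
  have hx' : ‖x‖ ≠ 0 := norm_ne_zero_iff.mpr hx
  rw [inner_add_right, real_inner_smul_right, real_inner_smul_right, real_inner_self_eq_norm_sq,
    mul_add, ← mul_div_assoc, mul_div_mul_left _ _ hx']
  field_simp

theorem inner_normalize_add_normalize_right (x y : E) :
    ⟪y, ‖x‖⁻¹ • x + ‖y‖⁻¹ • y⟫ = ‖y‖ * (1 + ⟪x, y⟫ / (‖x‖ * ‖y‖)) := by
  rw [add_comm, inner_normalize_add_normalize_left, real_inner_comm, mul_comm ‖x‖]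

end InnerProductSpace

theorem one_div_sqrt_mul_mul_self (a t : ℝ) : 1 / √t * (a * t) = 1 / (1 / √t * (1 / a)) := by
  rw [one_div_mul_one_div, one_div_one_div]
  linear_combination a * Real.div_sqrt (x := t)

namespace Matrix

variable {m R : Type*} [NonUnitalNonAssocCommSemiring R]

theorem mulVec_of_fin_two_cols (a b : m → R) (v : Fin 2 → R) :
    (of fun i j => if j = 0 then a i else b i) *ᵥ v = v 0 • a + v 1 • b := by
  ext i
  simp [mulVec, dotProduct, Fin.sum_univ_two, mul_comm]

theorem transpose_mulVec_of_fin_two_cols [Fintype m] (a b x : m → R) :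
    (of fun i j => if j = 0 then a i else b i)ᵀ *ᵥ x = ![a ⬝ᵥ x, b ⬝ᵥ x] := by
  ext j
  fin_cases j <;> simp [mulVec, dotProduct]

end Matrix

theorem stmt15_general {d : ℕ} (g_r g_b : EuclideanSpace ℝ (Fin d))
    (cosφ : ℝ) (hcos : cosφ = ⟪g_r, g_b⟫ / (‖g_r‖ * ‖g_b‖))
    (G : Matrix (Fin d) (Fin 2) ℝ)
    (hG : G = Matrix.of fun i j => if j = 0 then g_r i else g_b i)
    (v : Fin 2 → ℝ)
    (hv0 : v 0 = (1 / Real.sqrt (1 + cosφ)) * (1 / ‖g_r‖))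
    (hv1 : v 1 = (1 / Real.sqrt (1 + cosφ)) * (1 / ‖g_b‖)) :
    (G.transpose * G).mulVec v = (fun j => 1 / v j) ∧
    G.mulVec v = fun i =>
      (1 / Real.sqrt (1 + cosφ)) * (g_r i / ‖g_r‖ + g_b i / ‖g_b‖) := by
  set s := 1 / Real.sqrt (1 + cosφ)
  set w := s • (‖g_r‖⁻¹ • g_r + ‖g_b‖⁻¹ • g_b)
  have hGv : G *ᵥ v = WithLp.ofLp w := by
    rw [hG, mulVec_of_fin_two_cols, hv0, hv1]
    ext i
    simp only [w, PiLp.smul_apply, PiLp.add_apply, Pi.add_apply, Pi.smul_apply, smul_eq_mul]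
    ring
  have dotProduct_w (x : EuclideanSpace ℝ (Fin d)) : WithLp.ofLp x ⬝ᵥ WithLp.ofLp w = ⟪x, w⟫ := by
    rw [EuclideanSpace.inner_eq_star_dotProduct, star_trivial, dotProduct_comm]
  refine ⟨?_, ?_⟩
  · rw [← mulVec_mulVec, hGv, hG, transpose_mulVec_of_fin_two_cols]
    refine funext (Fin.forall_fin_two.mpr ⟨?_, ?_⟩)
    · rw [cons_val_zero, dotProduct_w, real_inner_smul_right, inner_normalize_add_normalize_left,
        ← hcos, hv0]
      exact one_div_sqrt_mul_mul_self _ _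
    · rw [cons_val_one, cons_val_zero, dotProduct_w, real_inner_smul_right,
        inner_normalize_add_normalize_right, ← hcos, hv1]
      exact one_div_sqrt_mul_mul_self _ _
  · rw [hGv]
    ext i
    simp [w, div_eq_inv_mul, mul_add]

theorem stmt15 {d : ℕ} (g_r g_b : EuclideanSpace ℝ (Fin d))
    (hr : g_r ≠ 0) (hb : g_b ≠ 0)
    (cosφ : ℝ) (hcos : cosφ = ⟪g_r, g_b⟫ / (‖g_r‖ * ‖g_b‖))
    (hcosgt : cosφ > -1)
    (G : Matrix (Fin d) (Fin 2) ℝ)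
    (hG : G = Matrix.of fun i j => if j = 0 then g_r i else g_b i)
    (v : Fin 2 → ℝ)
    (hv0 : v 0 = (1 / Real.sqrt (1 + cosφ)) * (1 / ‖g_r‖))
    (hv1 : v 1 = (1 / Real.sqrt (1 + cosφ)) * (1 / ‖g_b‖)) :
    (G.transpose * G).mulVec v = (fun j => 1 / v j) ∧
    G.mulVec v = fun i =>
      (1 / Real.sqrt (1 + cosφ)) * (g_r i / ‖g_r‖ + g_b i / ‖g_b‖) :=
  stmt15_general g_r g_b cosφ hcos G hG v hv0 hv1
end

section
/- Let g_r, g_b be nonzero vectors in ℝ^d with ⟨g_r, g_b⟩ < 0, let g = g_r + g_b, and let φ ∈ (π/2, π) be the angle between g_r and g_b with φ ≤ π - α for some α ∈ (0, π/2]. Let p_b = g - (⟨g, g_b⟩/‖g_b‖²) g_b. If ⟨g, g_b⟩ < 0, then ‖p_b‖ ≥ cos(π/2 - α)·‖g‖. -/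
open RealInnerProductSpace

private lemma stmt16_aux (a b t c : ℝ) (ha0 : 0 < a) (hb0 : 0 < b)
    (hc0 : 0 ≤ c) (hc1 : c ≤ 1) (htge : -(a * b * c) ≤ t) (h1 : t + b ^ 2 < 0) :
    (t + b ^ 2) ^ 2 ≤ c ^ 2 * (a ^ 2 + 2 * t + b ^ 2) * b ^ 2 := by
  have h2 : b ^ 2 ≤ a * b * c := by nlinarith
  have e1 : (t + b ^ 2) ^ 2 ≤ (a * b * c - b ^ 2) ^ 2 := by nlinarith
  have h3 : 0 ≤ (1 - c ^ 2) * (2 * a * b * c - b ^ 2) :=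
    mul_nonneg (by nlinarith) (by nlinarith)
  have h4 : 0 ≤ c ^ 2 * (t + a * b * c) := mul_nonneg (sq_nonneg c) (by linarith)
  have hb2 : (0:ℝ) ≤ b ^ 2 := sq_nonneg b
  nlinarith [mul_nonneg hb2 h3, mul_nonneg hb2 h4]

theorem stmt16 {d : ℕ} (g_r g_b : EuclideanSpace ℝ (Fin d))
    (hr : g_r ≠ 0) (hb : g_b ≠ 0) (hconf : ⟪g_r, g_b⟫ < 0)
    (g p_b : EuclideanSpace ℝ (Fin d))
    (hg : g = g_r + g_b)
    (φ α : ℝ)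
    (hφcos : Real.cos φ = ⟪g_r, g_b⟫ / (‖g_r‖ * ‖g_b‖))
    (hφ1 : Real.pi / 2 < φ) (hφ2 : φ < Real.pi)
    (hα1 : 0 < α) (hα2 : α ≤ Real.pi / 2)
    (hφα : φ ≤ Real.pi - α)
    (hpb : p_b = g - (⟪g, g_b⟫ / ‖g_b‖ ^ 2) • g_b)
    (hneg : ⟪g, g_b⟫ < 0) :
    ‖p_b‖ ≥ Real.cos (Real.pi / 2 - α) * ‖g‖ := by
  have ha0 : 0 < ‖g_r‖ := norm_pos_iff.mpr hr
  have hb0 : 0 < ‖g_b‖ := norm_pos_iff.mpr hb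
  have htab : (⟪g_r, g_b⟫ : ℝ) = ‖g_r‖ * ‖g_b‖ * Real.cos φ := by
    rw [hφcos]; field_simp
  have hc0 : 0 ≤ Real.cos α := Real.cos_nonneg_of_mem_Icc ⟨by linarith, hα2⟩
  have hc1 : Real.cos α ≤ 1 := Real.cos_le_one α
  have hcosφ : -Real.cos α ≤ Real.cos φ := by
    have := Real.cos_le_cos_of_nonneg_of_le_pi (by linarith [Real.pi_pos] : (0:ℝ) ≤ φ)
      (by linarith [Real.pi_pos] : Real.pi - α ≤ Real.pi) hφα
    rwa [Real.cos_pi_sub] at this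
  have htge : -(‖g_r‖ * ‖g_b‖ * Real.cos α) ≤ ⟪g_r, g_b⟫ := by
    rw [htab]
    nlinarith [mul_pos ha0 hb0]
  have hu : (⟪g, g_b⟫ : ℝ) = ⟪g_r, g_b⟫ + ‖g_b‖ ^ 2 := by
    rw [hg, inner_add_left, real_inner_self_eq_norm_sq]
  have hg2 : ‖g‖ ^ 2 = ‖g_r‖ ^ 2 + 2 * ⟪g_r, g_b⟫ + ‖g_b‖ ^ 2 := by
    rw [hg, @norm_add_sq_real]
  have hpb2 : ‖p_b‖ ^ 2 = ‖g‖ ^ 2 - (⟪g, g_b⟫ : ℝ) ^ 2 / ‖g_b‖ ^ 2 := by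
    rw [hpb, @norm_sub_sq_real, inner_smul_right, norm_smul, Real.norm_eq_abs,
      mul_pow, sq_abs]
    field_simp
    ring
  have hs : Real.cos (Real.pi / 2 - α) = Real.sin α := Real.cos_pi_div_two_sub α
  have hs0 : 0 ≤ Real.sin α :=
    Real.sin_nonneg_of_nonneg_of_le_pi (le_of_lt hα1) (by linarith [Real.pi_pos])
  have hs2 : Real.sin α ^ 2 = 1 - Real.cos α ^ 2 := by
    nlinarith [Real.sin_sq_add_cos_sq α]
  have h1 : (⟪g_r, g_b⟫ : ℝ) + ‖g_b‖ ^ 2 < 0 := by rw [← hu]; exact hneg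
  have hkey := stmt16_aux ‖g_r‖ ‖g_b‖ ⟪g_r, g_b⟫ (Real.cos α) ha0 hb0 hc0 hc1 htge h1
  have hkey2 : (⟪g, g_b⟫ : ℝ) ^ 2 ≤ Real.cos α ^ 2 * ‖g‖ ^ 2 * ‖g_b‖ ^ 2 := by
    rw [hu, hg2]; exact hkey
  have hsq : (Real.sin α * ‖g‖) ^ 2 ≤ ‖p_b‖ ^ 2 := by
    rw [hpb2, mul_pow, hs2]
    have hd : (⟪g, g_b⟫ : ℝ) ^ 2 / ‖g_b‖ ^ 2 ≤ Real.cos α ^ 2 * ‖g‖ ^ 2 := by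
      rw [div_le_iff₀ (by positivity)]
      linarith [hkey2]
    linarith [hd]
  rw [hs, ge_iff_le]
  exact le_of_pow_le_pow_left₀ two_ne_zero (norm_nonneg p_b) hsq
end
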